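/- arXiv:1805.11397 — 2 statements merged into one kernel-verified Lean document; each statement's English description precedes it below -/
import Mathlib

section
/- The dual norm of ‖·‖_♭ on ℝ^n is given by ‖x‖_{♭,*} = max( ∑_{i : x_i > 0} x_i , ∑_{i : x_i ≤ 0} |x_i| ). -/
/-!
Write `a` and `b` for the two terms of `‖x‖_♭`, so that `x i ∈ [-b, a]` for every `i`. Pairing
with `y`, the coordinates where `y i > 0` contribute at most `a ∑_{y_i > 0} y_i` and the others
at most `b ∑_{y_i ≤ 0} |y_i|`, so `⟨x, y⟩ ≤ (a + b) M ≤ M` where `M` is the larger of the two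
sums. Conversely, `M` is attained at the indicator of `{y_i > 0}` or at minus the indicator of
`{y_i ≤ 0}`, both of flat norm at most `1`.
-/

/-- The flat norm `‖x‖_♭` on `ℝ^n`. -/
noncomputable def flatNorm {n : ℕ} (x : Fin n → ℝ) : ℝ :=
  (⨆ i, max (x i) 0) + ⨆ i, max (-x i) 0

open Finset Set

theorem le_iSup_max_zero {ι : Type*} [Finite ι] (x : ι → ℝ) (i : ι) :
    x i ≤ ⨆ j, max (x j) 0 :=
  (le_max_left _ _).trans
    (le_ciSup (f := fun j => max (x j) 0) (Set.finite_range _).bddAbove i)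

theorem iSup_max_zero_nonneg {ι : Type*} (x : ι → ℝ) : 0 ≤ ⨆ j, max (x j) 0 :=
  Real.iSup_nonneg fun _ => le_max_right _ _

theorem iSup_max_zero_le {ι : Type*} {x : ι → ℝ} {c : ℝ} (hc : 0 ≤ c) (h : ∀ i, x i ≤ c) :
    ⨆ j, max (x j) 0 ≤ c :=
  Real.iSup_le (fun i => max_le (h i) hc) hc

theorem mem_Icc_iSup_max_zero {ι : Type*} [Finite ι] (x : ι → ℝ) (i : ι) :
    x i ∈ Icc (-⨆ j, max (-x j) 0) (⨆ j, max (x j) 0) :=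
  ⟨neg_le.mp (le_iSup_max_zero (-x) i), le_iSup_max_zero x i⟩

theorem sum_mul_le_of_mem_Icc {ι : Type*} [Fintype ι] {a b : ℝ} {x : ι → ℝ} (y : ι → ℝ)
    (hx : ∀ i, x i ∈ Icc (-b) a) :
    ∑ i, x i * y i ≤
      a * ∑ i ∈ univ.filter (fun i => 0 < y i), y i +
        b * ∑ i ∈ univ.filter (fun i => y i ≤ 0), |y i| := by
  rw [mul_sum, mul_sum, sum_filter, sum_filter, ← sum_add_distrib]
  refine sum_le_sum fun i _ => ?_
  obtain ⟨hbx, hxa⟩ := hx i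
  by_cases hy : 0 < y i
  · simpa [hy, not_le.mpr hy] using mul_le_mul_of_nonneg_right hxa hy.le
  · have hy : y i ≤ 0 := not_lt.mp hy
    simp only [hy, not_lt.mpr hy, if_true, if_false, abs_of_nonpos hy, zero_add]
    nlinarith

theorem flatNorm_le_of_mem_Icc {n : ℕ} {x : Fin n → ℝ} {a b : ℝ} (ha : 0 ≤ a) (hb : 0 ≤ b)
    (hx : ∀ i, x i ∈ Icc (-b) a) : flatNorm x ≤ a + b :=
  add_le_add (iSup_max_zero_le ha fun i => (hx i).2)
    (iSup_max_zero_le hb fun i => neg_le.mp (hx i).1)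

theorem sum_mul_le_of_flatNorm_le_one {n : ℕ} {x : Fin n → ℝ} (hx : flatNorm x ≤ 1)
    (y : Fin n → ℝ) :
    ∑ i, x i * y i ≤
      max (∑ i ∈ univ.filter (fun i => 0 < y i), y i)
        (∑ i ∈ univ.filter (fun i => y i ≤ 0), |y i|) := by
  set M := max (∑ i ∈ univ.filter (fun i => 0 < y i), y i)
    (∑ i ∈ univ.filter (fun i => y i ≤ 0), |y i|)
  set a := ⨆ j, max (x j) 0
  set b := ⨆ j, max (-x j) 0
  have hM : 0 ≤ M := (sum_nonneg fun i _ => abs_nonneg (y i)).trans (le_max_right _ _)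
  calc ∑ i, x i * y i
      ≤ a * ∑ i ∈ univ.filter (fun i => 0 < y i), y i +
          b * ∑ i ∈ univ.filter (fun i => y i ≤ 0), |y i| :=
        sum_mul_le_of_mem_Icc y (mem_Icc_iSup_max_zero x)
    _ ≤ a * M + b * M := by
        gcongr
        · exact iSup_max_zero_nonneg x
        · exact le_max_left _ _
        · exact iSup_max_zero_nonneg (-x)
        · exact le_max_right _ _
    _ = flatNorm x * M := by rw [flatNorm, add_mul]
    _ ≤ M := mul_le_of_le_one_left hM hx

/-- The dual norm of `‖·‖_♭` is
`‖y‖_{♭,*} = max (∑_{i : y_i > 0} y_i) (∑_{i : y_i ≤ 0} |y_i|)`. -/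
theorem dual_flatNorm_eq (n : ℕ) (y : Fin n → ℝ) :
    sSup {t : ℝ | ∃ x : Fin n → ℝ, flatNorm x ≤ 1 ∧ t = ∑ i, x i * y i} =
      max (∑ i ∈ Finset.univ.filter (fun i => 0 < y i), y i)
        (∑ i ∈ Finset.univ.filter (fun i => y i ≤ 0), |y i|) := by
  refine IsGreatest.csSup_eq ⟨?_, ?_⟩
  · rcases max_choice (∑ i ∈ univ.filter (fun i => 0 < y i), y i)
        (∑ i ∈ univ.filter (fun i => y i ≤ 0), |y i|) with h | h <;> rw [h, sum_filter]
    · refine ⟨fun i => if 0 < y i then 1 else 0, ?_, sum_congr rfl fun i _ => ?_⟩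
      · simpa using flatNorm_le_of_mem_Icc (x := fun i => if 0 < y i then 1 else 0)
          zero_le_one le_rfl fun i => by split_ifs <;> simp
      · by_cases hy : 0 < y i <;> simp [hy]
    · refine ⟨fun i => if y i ≤ 0 then -1 else 0, ?_, sum_congr rfl fun i _ => ?_⟩
      · simpa using flatNorm_le_of_mem_Icc (x := fun i => if y i ≤ 0 then -1 else 0)
          le_rfl zero_le_one fun i => by split_ifs <;> simp
      · by_cases hy : y i ≤ 0 <;> simp [hy, abs_of_nonpos]
  · rintro t ⟨x, hx, rfl⟩
    exact sum_mul_le_of_flatNorm_le_one hx y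
end

section
/- Let Φ_1,...,Φ_{n-1} : ℝ^2 → ℝ^2 and suppose that for every unit vector τ ∈ ℝ^2 and every x, ‖(⟨Φ_1(x),τ⟩,...,⟨Φ_{n-1}(x),τ⟩)‖_{♭,*} ≤ 1. Then for all 1 ≤ i ≤ j−1 ≤ n−1 and all x, |∑_{k=i}^{j-1} Φ_k(x)| ≤ 1. -/
/-!
Test the comass bound against the unit vector `τ` pointing along `S = ∑_{k=i}^{j} Φ_k(x)`:
then `|S| = ∑_{k=i}^{j} ⟨Φ_k(x), τ⟩`, and a partial sum of the coordinates of a vector is at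
most the sum of its positive coordinates, hence at most its dual flat norm.
-/

/-- The dual flat norm `‖y‖_{♭,*} = max (∑_{y_i > 0} y_i) (∑_{y_i ≤ 0} |y_i|)`. -/
noncomputable def dualFlatNorm {m : ℕ} (y : Fin m → ℝ) : ℝ :=
  max (∑ i ∈ Finset.univ.filter (fun i => 0 < y i), y i)
    (∑ i ∈ Finset.univ.filter (fun i => y i ≤ 0), |y i|)

open Finset

lemma sum_le_dualFlatNorm {m : ℕ} (y : Fin m → ℝ) (s : Finset (Fin m)) :
    ∑ k ∈ s, y k ≤ dualFlatNorm y := by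
  have sum_pos_eq : ∑ k ∈ univ.filter (fun k => 0 < y k), y k = ∑ k, max (y k) 0 := by
    rw [sum_filter]
    refine sum_congr rfl fun k _ => ?_
    split_ifs with hk
    · exact (max_eq_left hk.le).symm
    · exact (max_eq_right (not_lt.mp hk)).symm
  calc ∑ k ∈ s, y k ≤ ∑ k ∈ s, max (y k) 0 := sum_le_sum fun k _ => le_max_left _ _
    _ ≤ ∑ k, max (y k) 0 :=
        sum_le_sum_of_subset_of_nonneg (subset_univ s) fun k _ _ => le_max_right _ _
    _ = ∑ k ∈ univ.filter (fun k => 0 < y k), y k := sum_pos_eq.symm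
    _ ≤ dualFlatNorm y := le_max_left _ _

lemma norm_le_of_forall_inner_unit_le {E : Type*} [NormedAddCommGroup E]
    [InnerProductSpace ℝ E] {v : E} {C : ℝ} (hC : 0 ≤ C)
    (h : ∀ τ : E, ‖τ‖ = 1 → inner ℝ v τ ≤ C) : ‖v‖ ≤ C := by
  rcases eq_or_ne v 0 with rfl | hv
  · simpa using hC
  have hτ := h ((‖v‖⁻¹ : ℝ) • v) (norm_smul_inv_norm hv)
  rwa [real_inner_smul_right, real_inner_self_eq_norm_sq, sq, inv_mul_cancel_left₀
    (norm_ne_zero_iff.mpr hv)] at hτ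

/-- If the comass bound `‖(⟨Φ_1(x),τ⟩, …, ⟨Φ_m(x),τ⟩)‖_{♭,*} ≤ 1` holds for all
unit vectors `τ` and all `x`, then every consecutive sum of the fields satisfies
`|∑_{k=i}^{j} Φ_k(x)| ≤ 1`. -/
theorem comass_bound_implies_consecutive_bound (m : ℕ)
    (Φ : Fin m → EuclideanSpace ℝ (Fin 2) → EuclideanSpace ℝ (Fin 2))
    (h : ∀ (x τ : EuclideanSpace ℝ (Fin 2)), ‖τ‖ = 1 →
      dualFlatNorm (fun k => (inner ℝ (Φ k x) τ : ℝ)) ≤ 1) :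
    ∀ i j : Fin m, i ≤ j → ∀ x, ‖∑ k ∈ Finset.Icc i j, Φ k x‖ ≤ 1 := by
  intro i j _ x
  refine norm_le_of_forall_inner_unit_le zero_le_one fun τ hτ => ?_
  rw [sum_inner]
  exact (sum_le_dualFlatNorm _ _).trans (h x τ hτ)
end
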